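/- For every fixed v ∈ ℝⁿ, the function defined on the open set of n×n symmetric positive definite matrices by F(g) = ½ vᵀ N(g) v, where N(g) = g⁻¹ − g⁻¹Jᵀ(J g⁻¹ Jᵀ)⁻¹J g⁻¹, is differentiable, and for every symmetric positive definite g and every symmetric matrix u its directional derivative equals D F(g)[u] = −½ wᵀ u w, where w = N(g) v. -/

import Mathlib

/-!
Matrix inversion has derivative `u ↦ -A⁻¹ u A⁻¹` at an invertible `A`. Feeding this through the
chain and product rules, the terms of the derivative of
`N(X) = X⁻¹ - X⁻¹ Jᵀ (J X⁻¹ Jᵀ)⁻¹ J X⁻¹` recombine into `u ↦ -N u N`. Full row rank of `J` makes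
`J g⁻¹ Jᵀ` positive definite, so `N` is defined near every positive definite `g`; and `N g` is
symmetric, so `½ vᵀ (-N u N) v = -½ (N v)ᵀ u (N v)`.
-/

open Matrix

attribute [local instance] Matrix.normedAddCommGroup Matrix.normedSpace

theorem map_ringInverse {R S F : Type*} [Semiring R] [Semiring S] [EquivLike F R S]
    [RingEquivClass F R S] (f : F) (x : R) : f (Ring.inverse x) = Ring.inverse (f x) := by
  by_cases hx : IsUnit x
  · obtain ⟨u, rfl⟩ := hx
    rw [Ring.inverse_unit, show f u = (Units.map (f : R →* S) u : S) from rfl, Ring.inverse_unit]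
    rfl
  · rw [Ring.inverse_non_unit _ hx, Ring.inverse_non_unit _ (by rwa [isUnit_map_iff]), map_zero]

theorem Matrix.vecMul_injective_of_rank_eq_card {K m n : Type*} [Field K] [Fintype m] [Fintype n]
    {A : Matrix m n K} (hA : A.rank = Fintype.card m) : Function.Injective A.vecMul := by
  rw [vecMul_injective_iff, linearIndependent_iff_card_eq_finrank_span, ← hA,
    rank_eq_finrank_span_row]
  rfl

theorem Matrix.dotProduct_mul_mul_mulVec {R n : Type*} [CommSemiring R] [Fintype n] (v : n → R)
    (P u : Matrix n n R) : v ⬝ᵥ ((P * u * P) *ᵥ v) = (Pᵀ *ᵥ v) ⬝ᵥ (u *ᵥ (P *ᵥ v)) := by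
  rw [← mulVec_mulVec, ← mulVec_mulVec, dotProduct_mulVec, mulVec_transpose]

variable {𝕜 : Type*} [RCLike 𝕜] {l m n o : Type*} [Fintype l] [Fintype m] [Fintype n] [Fintype o]

namespace Matrix

noncomputable def mulCLM : Matrix l m 𝕜 →L[𝕜] Matrix m n 𝕜 →L[𝕜] Matrix l n 𝕜 :=
  (mulLinearMap 𝕜).toContinuousBilinearMap

@[simp]
theorem mulCLM_apply (P : Matrix l m 𝕜) (Q : Matrix m n 𝕜) : mulCLM P Q = P * Q := rfl

noncomputable def mulLeftRightCLM (P : Matrix l m 𝕜) (Q : Matrix n o 𝕜) :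
    Matrix m n 𝕜 →L[𝕜] Matrix l o 𝕜 :=
  (mulCLM.flip Q).comp (mulCLM P)

@[simp]
theorem mulLeftRightCLM_apply (P : Matrix l m 𝕜) (Q : Matrix n o 𝕜) (u : Matrix m n 𝕜) :
    mulLeftRightCLM P Q u = P * u * Q := rfl

noncomputable def dotProductMulVecCLM (v : n → 𝕜) : Matrix n n 𝕜 →L[𝕜] 𝕜 :=
  LinearMap.toContinuousLinearMap
    { toFun := fun M => v ⬝ᵥ (M *ᵥ v)
      map_add' := fun M N => by simp only [add_mulVec, dotProduct_add]
      map_smul' := fun c M => by simp only [smul_mulVec, dotProduct_smul, RingHom.id_apply] }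

@[simp]
theorem dotProductMulVecCLM_apply (v : n → 𝕜) (M : Matrix n n 𝕜) :
    dotProductMulVecCLM v M = v ⬝ᵥ (M *ᵥ v) := rfl

end Matrix

/- The sup norm on matrices is not submultiplicative, so the derivative of `Ring.inverse` in
complete normed algebras is transported from the operator algebra of `EuclideanSpace 𝕜 n`. -/
theorem hasFDerivAt_matrix_inv [DecidableEq n] {A : Matrix n n 𝕜} (hA : IsUnit A) :
    HasFDerivAt (fun X : Matrix n n 𝕜 => X⁻¹) (-mulLeftRightCLM A⁻¹ A⁻¹) A := by
  let e : Matrix n n 𝕜 ≃L[𝕜] (EuclideanSpace 𝕜 n →L[𝕜] EuclideanSpace 𝕜 n) :=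
    toEuclideanCLM.toAlgEquiv.toLinearEquiv.toContinuousLinearEquiv
  have he (X : Matrix n n 𝕜) : e X = (toEuclideanCLM : Matrix n n 𝕜 ≃⋆ₐ[𝕜] _) X := rfl
  have hinv (X : Matrix n n 𝕜) : X⁻¹ = e.symm (Ring.inverse (e X)) := by
    rw [ContinuousLinearEquiv.eq_symm_apply, he, he, nonsing_inv_eq_ringInverse, map_ringInverse]
  obtain ⟨u, hu⟩ : IsUnit (e A) := hA.map (toEuclideanCLM : Matrix n n 𝕜 ≃⋆ₐ[𝕜] _)
  have hcomp := (e.symm : _ →L[𝕜] Matrix n n 𝕜).hasFDerivAt.comp A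
    ((hu ▸ hasFDerivAt_ringInverse (𝕜 := 𝕜) u).comp A e.hasFDerivAt)
  rw [show (fun X : Matrix n n 𝕜 => X⁻¹) = e.symm ∘ Ring.inverse ∘ e from funext hinv]
  refine hcomp.congr_fderiv ?_
  ext1 w
  have hu_inv : ((u⁻¹ : (_)ˣ) : EuclideanSpace 𝕜 n →L[𝕜] EuclideanSpace 𝕜 n) = e A⁻¹ := by
    rw [← Ring.inverse_unit, hu, hinv A, ContinuousLinearEquiv.apply_symm_apply]
  change e.symm (-(↑u⁻¹ * e w * ↑u⁻¹)) = -(A⁻¹ * w * A⁻¹)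
  rw [hu_inv, he, he, ← map_mul, ← map_mul, ← map_neg, ← he,
    ContinuousLinearEquiv.symm_apply_apply]

section constrainedInverse

variable [DecidableEq n] [DecidableEq m]

noncomputable def constrainedInverse (J : Matrix m n 𝕜) (X : Matrix n n 𝕜) : Matrix n n 𝕜 :=
  X⁻¹ - X⁻¹ * Jᵀ * (J * X⁻¹ * Jᵀ)⁻¹ * J * X⁻¹

theorem constrainedInverse_transpose (J : Matrix m n 𝕜) {X : Matrix n n 𝕜} (hX : Xᵀ = X) :
    (constrainedInverse J X)ᵀ = constrainedInverse J X := by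
  simp only [constrainedInverse, transpose_sub, transpose_mul, transpose_transpose,
    transpose_nonsing_inv, hX, Matrix.mul_assoc]

theorem hasFDerivAt_constrainedInverse (J : Matrix m n 𝕜) {X : Matrix n n 𝕜} (hX : IsUnit X)
    (hK : IsUnit (J * X⁻¹ * Jᵀ)) :
    HasFDerivAt (constrainedInverse J)
      (-mulLeftRightCLM (constrainedInverse J X) (constrainedInverse J X)) X := by
  have hinv := hasFDerivAt_matrix_inv hX
  have hKinv :=
    (hasFDerivAt_matrix_inv hK).comp X ((mulLeftRightCLM J Jᵀ).hasFDerivAt.comp X hinv)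
  have hP := (mulCLM.flip Jᵀ).hasFDerivAt.comp X hinv
  have hPKJ := (mulCLM.flip J).hasFDerivAt.comp X (mulCLM.hasFDerivAt_of_bilinear hP hKinv)
  refine (hinv.sub (mulCLM.hasFDerivAt_of_bilinear hPKJ hinv)).congr_fderiv ?_
  ext1 u
  set A := X⁻¹
  set K := (J * A * Jᵀ)⁻¹
  -- The product and difference rules are stated for the normed topology on matrices, which is
  -- not reducibly the product topology, so the derivative is evaluated by unfolding.
  change -(A * u * A) - (A * Jᵀ * K * J * -(A * u * A) +
      (A * Jᵀ * -(K * (J * -(A * u * A) * Jᵀ) * K) + -(A * u * A) * Jᵀ * K) * J * A) =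
    -((A - A * Jᵀ * K * J * A) * u * (A - A * Jᵀ * K * J * A))
  simp only [Matrix.mul_sub, Matrix.sub_mul, Matrix.add_mul, Matrix.mul_neg, Matrix.neg_mul,
    Matrix.mul_assoc]
  abel

end constrainedInverse

theorem hasFDerivAt_kinetic_general {n m : ℕ}
    (J : Matrix (Fin m) (Fin n) ℝ) (hJ : J.rank = m)
    (v : Fin n → ℝ)
    (N : Matrix (Fin n) (Fin n) ℝ → Matrix (Fin n) (Fin n) ℝ)
    (hN : ∀ X : Matrix (Fin n) (Fin n) ℝ,
      N X = X⁻¹ - X⁻¹ * Jᵀ * (J * X⁻¹ * Jᵀ)⁻¹ * J * X⁻¹)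
    (F : Matrix (Fin n) (Fin n) ℝ → ℝ)
    (hF : ∀ X : Matrix (Fin n) (Fin n) ℝ, F X = (1 / 2) * (v ⬝ᵥ (N X *ᵥ v))) :
    ∀ g : Matrix (Fin n) (Fin n) ℝ, g.PosDef →
      ∃ f' : Matrix (Fin n) (Fin n) ℝ →L[ℝ] ℝ, HasFDerivAt F f' g ∧
        ∀ u : Matrix (Fin n) (Fin n) ℝ, u.IsSymm →
          f' u = -(1 / 2) * ((N g *ᵥ v) ⬝ᵥ (u *ᵥ (N g *ᵥ v))) := by
  intro g hg
  obtain rfl : N = constrainedInverse J := funext hN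
  obtain rfl : F = fun X => (1 / 2 : ℝ) • dotProductMulVecCLM v (constrainedInverse J X) :=
    funext hF
  have hK : (J * g⁻¹ * Jᵀ).PosDef := by
    simpa using hg.inv.mul_mul_conjTranspose_same
      (J.vecMul_injective_of_rank_eq_card (by simpa using hJ))
  have hNg := hasFDerivAt_constrainedInverse J hg.isUnit hK.isUnit
  refine ⟨(1 / 2 : ℝ) • (dotProductMulVecCLM v).comp
      (-mulLeftRightCLM (constrainedInverse J g) (constrainedInverse J g)),
    ((dotProductMulVecCLM v).hasFDerivAt.comp g hNg).const_smul (1 / 2 : ℝ), fun u _ => ?_⟩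
  have hgT : gᵀ = g := hg.isHermitian
  simp only [_root_.smul_apply, ContinuousLinearMap.comp_apply, _root_.neg_apply,
    mulLeftRightCLM_apply, dotProductMulVecCLM_apply, neg_mulVec, dotProduct_neg,
    dotProduct_mul_mul_mulVec, constrainedInverse_transpose J hgT, smul_eq_mul]
  ring

/-- For fixed `v`, the function `F(g) = ½ vᵀ N(g) v`, with
`N(g) = g⁻¹ − g⁻¹ Jᵀ (J g⁻¹ Jᵀ)⁻¹ J g⁻¹`, is differentiable at every symmetric positive
definite `g`, and its directional derivative at a symmetric `u` is `−½ wᵀ u w` where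
`w = N(g) v`. -/
theorem hasFDerivAt_kinetic {n m : ℕ} (hm : 0 < m) (hmn : m < n)
    (J : Matrix (Fin m) (Fin n) ℝ) (hJ : J.rank = m)
    (v : Fin n → ℝ)
    (N : Matrix (Fin n) (Fin n) ℝ → Matrix (Fin n) (Fin n) ℝ)
    (hN : ∀ X : Matrix (Fin n) (Fin n) ℝ,
      N X = X⁻¹ - X⁻¹ * Jᵀ * (J * X⁻¹ * Jᵀ)⁻¹ * J * X⁻¹)
    (F : Matrix (Fin n) (Fin n) ℝ → ℝ)
    (hF : ∀ X : Matrix (Fin n) (Fin n) ℝ, F X = (1 / 2) * (v ⬝ᵥ (N X *ᵥ v))) :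
    ∀ g : Matrix (Fin n) (Fin n) ℝ, g.PosDef →
      ∃ f' : Matrix (Fin n) (Fin n) ℝ →L[ℝ] ℝ, HasFDerivAt F f' g ∧
        ∀ u : Matrix (Fin n) (Fin n) ℝ, u.IsSymm →
          f' u = -(1 / 2) * ((N g *ᵥ v) ⬝ᵥ (u *ᵥ (N g *ᵥ v))) :=
  hasFDerivAt_kinetic_general J hJ v N hN F hF
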